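/- arXiv:1609.02251 — 3 statements merged into one kernel-verified Lean document; each statement's English description precedes it below -/
import Mathlib

section
/- Consider the iteration K_0 := C, K_j := Ω(K_{j-1}) for j ≥ 1. If the limit is reached in a finite number of steps, i.e. there exists n with K_{n+1} = K_n, then K_n = sup O(C). -/
open Set

namespace RelObs

variable {α : Type*}

/-- Prefix closure of a language. -/
def pre (L : Set (List α)) : Set (List α) := {s | ∃ t ∈ L, s <+: t}

/-- Natural projection `P`: erase unobservable events (those with `obs a = false`). -/
def proj (obs : α → Bool) (s : List α) : List α := s.filter obs

/-- `[N] := P⁻¹ P (N)`. -/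
def brack (obs : α → Bool) (N : Set (List α)) : Set (List α) :=
  {s | ∃ t ∈ N, proj obs s = proj obs t}

/-- `L.σ := { s σ | s ∈ L }`. -/
def catSig (L : Set (List α)) (σ : α) : Set (List α) := {w | ∃ s ∈ L, w = s ++ [σ]}

/-- `D(A) := ⋃_{σ∈Σ} ([A ∩ C̄.σ] ∩ C̄.σ)`. -/
def Dop (obs : α → Bool) (C A : Set (List α)) : Set (List α) :=
  ⋃ σ : α, brack obs (A ∩ catSig (pre C) σ) ∩ catSig (pre C) σ

/-- Relative observability of `K` w.r.t. plant `M`, ambient `C`, projection given by `obs`. -/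
def CObservable (obs : α → Bool) (M C K : Set (List α)) : Prop :=
  (∀ (s s' : List α) (σ : α), s ++ [σ] ∈ pre K → s' ∈ pre C → s' ++ [σ] ∈ pre M →
      proj obs s = proj obs s' → s' ++ [σ] ∈ pre K) ∧
  (∀ s s' : List α, s ∈ K → s' ∈ pre C ∩ M → proj obs s = proj obs s' → s' ∈ K)

/-- The supremal `C`-observable sublanguage of `C`. -/
def supO (obs : α → Bool) (M C : Set (List α)) : Set (List α) :=
  ⋃₀ {K | K ⊆ C ∧ CObservable obs M C K}

/-- `F(K) := { s ∈ K̄ | D(s̄) ∩ M̄ ⊆ K̄ }`. -/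
def Fop (obs : α → Bool) (M C K : Set (List α)) : Set (List α) :=
  {s | s ∈ pre K ∧ Dop obs C (pre {s}) ∩ pre M ⊆ pre K}

/-- Supremal sublanguage of `A` normal w.r.t. `H`. -/
def supN (obs : α → Bool) (H A : Set (List α)) : Set (List α) :=
  ⋃₀ {A' | A' ⊆ A ∧ brack obs A' ∩ H = A'}

/-- `Ω(K) := sup N (K ∩ F(K), C̄ ∩ M)`. -/
def Omega (obs : α → Bool) (M C K : Set (List α)) : Set (List α) :=
  supN obs (pre C ∩ M) (K ∩ Fop obs M C K)

/-- Controllability of `K` w.r.t. `M`, with uncontrollable events `Su`. -/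
def Controllable (Su : Set α) (M K : Set (List α)) : Prop :=
  ∀ (s : List α) (σ : α), σ ∈ Su → s ∈ pre K → s ++ [σ] ∈ pre M → s ++ [σ] ∈ pre K

/-- Supremal controllable sublanguage of `K`. -/
def supC (Su : Set α) (M K : Set (List α)) : Set (List α) :=
  ⋃₀ {K' | K' ⊆ K ∧ Controllable Su M K'}

/-- `Γ(K) := sup O (sup C (K))`, the supremal `C`-observable sublanguage of `sup C(K)`. -/
def Gamma (obs : α → Bool) (Su : Set α) (M C K : Set (List α)) : Set (List α) :=
  ⋃₀ {K' | K' ⊆ supC Su M K ∧ CObservable obs M C K'}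

/-- Supremal controllable and `C`-observable sublanguage of `C`. -/
def supCO (obs : α → Bool) (Su : Set α) (M C : Set (List α)) : Set (List α) :=
  ⋃₀ {K | K ⊆ C ∧ Controllable Su M K ∧ CObservable obs M C K}

/-- Nerode equivalence of a language, as a setoid on `Σ*`. -/
def NerS (L : Set (List α)) : Setoid (List α) :=
  ⟨fun s t => ∀ w, s ++ w ∈ L ↔ t ++ w ∈ L,
   ⟨fun _ _ => Iff.rfl, fun h w => (h w).symm, fun h1 h2 w => (h1 w).trans (h2 w)⟩⟩

/-- The two-block equivalence `{A, Σ* − A}`. -/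
def blockS (A : Set (List α)) : Setoid (List α) :=
  ⟨fun s t => s ∈ A ↔ t ∈ A, ⟨fun _ => Iff.rfl, fun h => h.symm, fun h1 h2 => h1.trans h2⟩⟩

/-- Right congruence on `Σ*`. -/
def RightCong (ρ : Setoid (List α)) : Prop :=
  ∀ s t u : List α, ρ.r s t → ρ.r (s ++ u) (t ++ u)

/-- `L1` is `ρ`-supported on `L2`. -/
def SupportedOn (ρ : Setoid (List α)) (L1 L2 : Set (List α)) : Prop :=
  pre L1 ⊆ pre L2 ∧ blockS (pre L1) ⊓ ρ ⊓ NerS L2 ≤ NerS L1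

/-- `‖L‖`, the number of Nerode equivalence classes of `L`. -/
noncomputable def nClasses (L : Set (List α)) : ℕ := Nat.card (Quotient (NerS L))

/-- A language is regular iff its Nerode equivalence has finitely many classes. -/
def Regular (L : Set (List α)) : Prop := Finite (Quotient (NerS L))

/-- `℘(π) := ker f_π`, where `f_π(s) = { P_π(s') | s' ∈ [s] ∩ (C̄ ∩ M) }`. -/
def pw (obs : α → Bool) (M C : Set (List α)) (π : Setoid (List α)) : Setoid (List α) :=
  Setoid.ker (fun s => Quotient.mk π '' (brack obs {s} ∩ (pre C ∩ M)))

/-- `Ñ(L) := { s ∈ L | [s] ⊆ L }`. -/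
def tilN (obs : α → Bool) (L : Set (List α)) : Set (List α) :=
  {s | s ∈ L ∧ brack obs {s} ⊆ L}

/-- Supremal prefix-closed sublanguage of `A`. -/
def supFhat (A : Set (List α)) : Set (List α) :=
  ⋃₀ {A' | A' ⊆ A ∧ pre A' = A'}

end RelObs

open RelObs

section Aux

variable {α : Type*}

lemma proj_append (obs : α → Bool) (s t : List α) :
    proj obs (s ++ t) = proj obs s ++ proj obs t := List.filter_append _ _

lemma Omega_subset (obs : α → Bool) (M C K : Set (List α)) :
    Omega obs M C K ⊆ K := by
  rintro w ⟨A', ⟨hsub, _⟩, hw⟩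
  exact (hsub hw).1

lemma obs_subset_Omega (obs : α → Bool) (M C K K' : Set (List α))
    (hCM : C ⊆ M) (hK'C : K' ⊆ C) (hobs : CObservable obs M C K') (hK'K : K' ⊆ K) :
    K' ⊆ Omega obs M C K := by
  intro s hs
  refine ⟨K', ⟨?_, ?_⟩, hs⟩
  · -- K' ⊆ K ∩ Fop obs M C K
    intro t ht
    refine ⟨hK'K ht, ⟨t, hK'K ht, List.prefix_refl t⟩, ?_⟩
    rintro w ⟨hwD, hwM⟩
    obtain ⟨σ, hw⟩ := mem_iUnion.mp hwD
    obtain ⟨⟨u, ⟨hu_pre, hu_cat⟩, hproj⟩, s', hs'C, rfl⟩ := hw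
    obtain ⟨u0, hu0C, rfl⟩ := hu_cat
    have hu0K' : u0 ++ [σ] ∈ pre K' := by
      obtain ⟨t', ht', hpre⟩ := hu_pre
      rw [mem_singleton_iff] at ht'
      exact ⟨t, ht, ht' ▸ hpre⟩
    have hps : proj obs u0 = proj obs s' := by
      rw [proj_append, proj_append] at hproj
      exact (List.append_cancel_right hproj).symm
    have : s' ++ [σ] ∈ pre K' := hobs.1 u0 s' σ hu0K' hs'C hwM hps
    obtain ⟨t', ht', hpre⟩ := this
    exact ⟨t', hK'K ht', hpre⟩
  · -- normality: brack obs K' ∩ (pre C ∩ M) = K'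
    ext w
    constructor
    · rintro ⟨⟨t, htK', hproj⟩, hwH⟩
      exact hobs.2 t w htK' hwH hproj.symm
    · intro hw
      exact ⟨⟨w, hw, rfl⟩, ⟨w, hK'C hw, List.prefix_refl w⟩, hCM (hK'C hw)⟩

lemma fixed_observable (obs : α → Bool) (M C K : Set (List α))
    (hKC : K ⊆ C) (hfix : Omega obs M C K = K) : CObservable obs M C K := by
  constructor
  · intro s s' σ hsK hs'C hs'M hproj
    obtain ⟨t, htK, hpre⟩ := hsK
    have htF : t ∈ Fop obs M C K := by
      have htK' := htK
      rw [← hfix] at htK'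
      obtain ⟨A', ⟨hA'sub, _⟩, htA'⟩ := htK'
      exact (hA'sub htA').2
    apply htF.2
    refine ⟨mem_iUnion.mpr ⟨σ, ⟨s ++ [σ], ⟨⟨t, mem_singleton t, hpre⟩,
      ⟨s, ⟨t, hKC htK, (List.prefix_append s [σ]).trans hpre⟩, rfl⟩⟩, ?_⟩,
      ⟨s', hs'C, rfl⟩⟩, hs'M⟩
    rw [proj_append, proj_append, hproj]
  · intro s s' hsK hs'H hproj
    rw [← hfix] at hsK ⊢
    obtain ⟨A', ⟨hsub, hnorm⟩, hsA'⟩ := hsK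
    refine ⟨A', ⟨hsub, hnorm⟩, ?_⟩
    rw [← hnorm]
    exact ⟨⟨s, hsA', hproj.symm⟩, hs'H⟩

end Aux

/-- if the iteration `K_0 = C`, `K_j = Ω(K_{j-1})` reaches its limit in
finitely many steps, the limit is `sup O(C)`. -/
theorem statement5 {α : Type*} [Fintype α] (obs : α → Bool) (M C : Set (List α))
    (hCM : C ⊆ M) (K : ℕ → Set (List α))
    (hK0 : K 0 = C) (hKs : ∀ j : ℕ, K (j + 1) = Omega obs M C (K j)) :
    ∀ n : ℕ, K (n + 1) = K n → K n = supO obs M C := by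
  intro n hfix'
  have hfix : Omega obs M C (K n) = K n := by rw [← hKs n]; exact hfix'
  have hKC : ∀ j, K j ⊆ C := by
    intro j
    induction j with
    | zero => rw [hK0]
    | succ j ih => rw [hKs]; exact (Omega_subset obs M C (K j)).trans ih
  have hobsKn := fixed_observable obs M C (K n) (hKC n) hfix
  apply Set.Subset.antisymm
  · exact subset_sUnion_of_mem ⟨hKC n, hobsKn⟩
  · rintro w ⟨K', ⟨hK'C, hK'obs⟩, hwK'⟩
    have hall : ∀ j, K' ⊆ K j := by
      intro j
      induction j with
      | zero => rw [hK0]; exact hK'C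
      | succ j ih =>
        rw [hKs]
        exact obs_subset_Omega obs M C (K j) K' hCM hK'C hK'obs ih
    exact hall n hwK'
end

section
/- Let K_0 ⊇ K_1 ⊇ K_2 ⊇ ⋯ be a monotone descending sequence of languages over Σ with K_0 regular, and let ρ be a right congruence on Σ* with finitely many equivalence classes such that K_j is ρ-supported on K_{j-1} for all j ≥ 1. Then each K_j is regular, the sequence is finitely convergent (there exists n such that K_j = K_n for all j ≥ n; write K := K_n), K is ρ-supported on K_0, and ||K|| ≤ |ρ| · ||K_0|| + 1. -/
open Set

namespace RelObs

variable {α : Type*}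

-- auxiliary lemmas

lemma nerS_rightCong (L : Set (List α)) : RightCong (NerS L) := by
  intro s t u h w
  simpa [List.append_assoc] using h (u ++ w)

lemma mem_pre_of_append {L : Set (List α)} {s w : List α} (h : s ++ w ∈ L) : s ∈ pre L :=
  ⟨s ++ w, h, List.prefix_append _ _⟩

lemma nerS_dump {L : Set (List α)} {s t : List α} (hs : s ∉ pre L) (ht : t ∉ pre L) :
    (NerS L).r s t := by
  intro w
  constructor
  · intro h; exact (hs (mem_pre_of_append h)).elim
  · intro h; exact (ht (mem_pre_of_append h)).elim

lemma pre_mono {L1 L2 : Set (List α)} (h : L1 ⊆ L2) : pre L1 ⊆ pre L2 :=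
  fun _ ⟨t, ht, hp⟩ => ⟨t, h ht, hp⟩

section chain
variable (K : ℕ → Set (List α)) (ρ : Setoid (List α))

lemma keyB (hsup : ∀ j : ℕ, SupportedOn ρ (K (j + 1)) (K j)) :
    ∀ j s t, (∀ i, i ≤ j → (s ∈ pre (K i) ↔ t ∈ pre (K i))) → ρ.r s t →
      (NerS (K 0)).r s t → (NerS (K j)).r s t := by
  intro j
  induction j with
  | zero => intro s t _ _ h0; exact h0
  | succ j ih =>
    intro s t hb hρ h0
    have hj : (NerS (K j)).r s t := ih s t (fun i hi => hb i (Nat.le_succ_of_le hi)) hρ h0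
    exact (hsup j).2 ⟨⟨hb (j + 1) le_rfl, hρ⟩, hj⟩

lemma key2 (hmono : ∀ j : ℕ, K (j + 1) ⊆ K j)
    (hsup : ∀ j : ℕ, SupportedOn ρ (K (j + 1)) (K j)) :
    ∀ j s t, s ∈ pre (K j) → t ∈ pre (K j) → ρ.r s t →
      (NerS (K 0)).r s t → (NerS (K j)).r s t := by
  have hanti : Antitone K := antitone_nat_of_succ_le hmono
  intro j s t hs ht hρ h0
  refine keyB K ρ hsup j s t (fun i hi => ?_) hρ h0
  have h1 : pre (K j) ⊆ pre (K i) := pre_mono (hanti hi)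
  exact ⟨fun _ => h1 ht, fun _ => h1 hs⟩

lemma cardBound (hmono : ∀ j : ℕ, K (j + 1) ⊆ K j) (hreg0 : Regular (K 0))
    (hfin : Finite (Quotient ρ))
    (hsup : ∀ j : ℕ, SupportedOn ρ (K (j + 1)) (K j)) (j : ℕ) :
    Finite (Quotient (NerS (K j))) ∧
      Nat.card (Quotient (NerS (K j))) ≤
        Nat.card (Quotient ρ) * Nat.card (Quotient (NerS (K 0))) + 1 := by
  classical
  haveI hf0 : Finite (Quotient (NerS (K 0))) := hreg0
  haveI hfr : Finite (Quotient ρ) := hfin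
  set F : List α → Option (Quotient ρ × Quotient (NerS (K 0))) :=
    fun s => if s ∈ pre (K j) then some (⟦s⟧, ⟦s⟧) else none with hF
  have hker : ∀ s t, F s = F t → (NerS (K j)).r s t := by
    intro s t h
    by_cases hs : s ∈ pre (K j) <;> by_cases ht : t ∈ pre (K j)
    · simp only [hF, if_pos hs, if_pos ht, Option.some.injEq, Prod.mk.injEq] at h
      exact key2 K ρ hmono hsup j s t hs ht (Quotient.exact h.1) (Quotient.exact h.2)
    · simp [hF, if_pos hs, if_neg ht] at h
    · simp [hF, if_neg hs, if_pos ht] at h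
    · exact nerS_dump hs ht
  haveI hopt : Finite (Option (Quotient ρ × Quotient (NerS (K 0)))) :=
    Finite.of_equiv ((Quotient ρ × Quotient (NerS (K 0))) ⊕ PUnit.{1}) (Equiv.optionEquivSumPUnit _).symm
  -- surjection from Quotient (ker F)
  set G : Quotient (Setoid.ker F) → Quotient (NerS (K j)) :=
    Quotient.map' id (fun a b hab => hker a b hab) with hG
  have hGsurj : Function.Surjective G := by
    intro q
    obtain ⟨s, rfl⟩ := Quotient.exists_rep q
    exact ⟨Quotient.mk'' s, rfl⟩
  haveI : Finite (Quotient (Setoid.ker F)) := by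
    have e := Setoid.quotientKerEquivRange F
    haveI : Finite (Set.range F) := Set.Finite.to_subtype (Set.toFinite _)
    exact Finite.of_equiv _ e.symm
  refine ⟨Finite.of_surjective G hGsurj, ?_⟩
  calc Nat.card (Quotient (NerS (K j))) ≤ Nat.card (Quotient (Setoid.ker F)) :=
        Nat.card_le_card_of_surjective G hGsurj
    _ = Nat.card (Set.range F) := Nat.card_congr (Setoid.quotientKerEquivRange F)
    _ ≤ Nat.card (Option (Quotient ρ × Quotient (NerS (K 0)))) :=
        Nat.card_le_card_of_injective _ Subtype.val_injective
    _ = Nat.card (Quotient ρ) * Nat.card (Quotient (NerS (K 0))) + 1 := by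
        rw [Finite.card_option, Nat.card_prod]

end chain

noncomputable def nerStep (L : Set (List α)) (q : Quotient (NerS L)) (a : α) :
    Quotient (NerS L) :=
  Quotient.map (fun s => s ++ [a]) (fun s t h => nerS_rightCong L s t [a] h) q

noncomputable def nerDelta (L : Set (List α)) {N : ℕ} (e : Quotient (NerS L) ↪ Fin N) :
    Fin N → α → Fin N := fun i a => by
  classical exact if h : ∃ q, e q = i then e (nerStep L h.choose a) else i

lemma nerDelta_apply (L : Set (List α)) {N : ℕ} (e : Quotient (NerS L) ↪ Fin N)
    (w : List α) (a : α) : nerDelta L e (e ⟦w⟧) a = e ⟦w ++ [a]⟧ := by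
  have hex : ∃ q, e q = e ⟦w⟧ := ⟨⟦w⟧, rfl⟩
  unfold nerDelta
  rw [dif_pos hex]
  have hc : hex.choose = (⟦w⟧ : Quotient (NerS L)) := e.injective hex.choose_spec
  rw [hc]
  rfl

lemma nerFoldl (L : Set (List α)) {N : ℕ} (e : Quotient (NerS L) ↪ Fin N) (w : List α) :
    List.foldl (nerDelta L e) (e ⟦([] : List α)⟧) w = e ⟦w⟧ := by
  induction w using List.reverseRecOn with
  | nil => rfl
  | append_singleton w a ih =>
    rw [List.foldl_append, ih, List.foldl_cons, List.foldl_nil, nerDelta_apply]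

lemma nerRecover (L : Set (List α)) {N : ℕ} (e : Quotient (NerS L) ↪ Fin N) (w : List α) :
    w ∈ L ↔ List.foldl (nerDelta L e) (e ⟦([] : List α)⟧) w ∈
      {i : Fin N | ∃ s, s ∈ L ∧ e ⟦s⟧ = i} := by
  rw [nerFoldl]
  constructor
  · intro h; exact ⟨w, h, rfl⟩
  · rintro ⟨s, hs, he⟩
    have : (⟦s⟧ : Quotient (NerS L)) = ⟦w⟧ := e.injective he
    have h2 : (NerS L).r s w := Quotient.exact this
    have := (h2 []).mp (by simpa using hs)
    simpa using this

-- finiteness of languages with bounded Nerode index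
lemma finite_bounded_nerode [Fintype α] (N : ℕ) :
    {L : Set (List α) | Finite (Quotient (NerS L)) ∧
      Nat.card (Quotient (NerS L)) ≤ N}.Finite := by
  classical
  set S := {L : Set (List α) | Finite (Quotient (NerS L)) ∧ Nat.card (Quotient (NerS L)) ≤ N}
  have hemb : ∀ L ∈ S, Nonempty (Quotient (NerS L) ↪ Fin N) := by
    intro L hL
    haveI : Finite (Quotient (NerS L)) := hL.1
    haveI := Fintype.ofFinite (Quotient (NerS L))
    apply Function.Embedding.nonempty_of_card_le
    rw [Fintype.card_fin]
    rw [← Nat.card_eq_fintype_card]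
    exact hL.2
  set Φ : ↥S → (Fin N → α → Fin N) × Set (Fin N) × Fin N := fun L =>
    letI e := (hemb L.1 L.2).some
    (nerDelta L.1 e, {i : Fin N | ∃ s, s ∈ L.1 ∧ e ⟦s⟧ = i}, e ⟦([] : List α)⟧) with hΦ
  have hΦinj : Function.Injective Φ := by
    intro L1 L2 h
    have h1 := congrArg Prod.fst h
    have h2 := congrArg (fun p => p.2.1) h
    have h3 := congrArg (fun p => p.2.2) h
    simp only [hΦ] at h1 h2 h3
    apply Subtype.ext
    ext w
    rw [nerRecover L1.1 (hemb L1.1 L1.2).some w, nerRecover L2.1 (hemb L2.1 L2.2).some w,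
      h1, h2, h3]
  haveI : Finite ↥S := Finite.of_injective Φ hΦinj
  exact Set.toFinite S

end RelObs

open RelObs

/-- finite convergence of a descending chain supported on a finite
right congruence. -/
theorem statement7 {α : Type*} [Fintype α] (K : ℕ → Set (List α))
    (hmono : ∀ j : ℕ, K (j + 1) ⊆ K j) (hreg0 : Regular (K 0))
    (ρ : Setoid (List α)) (hrc : RightCong ρ) (hfin : Finite (Quotient ρ))
    (hsup : ∀ j : ℕ, SupportedOn ρ (K (j + 1)) (K j)) :
    (∀ j : ℕ, Regular (K j)) ∧
      ∃ n : ℕ, (∀ j : ℕ, n ≤ j → K j = K n) ∧ SupportedOn ρ (K n) (K 0) ∧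
        nClasses (K n) ≤ Nat.card (Quotient ρ) * nClasses (K 0) + 1 := by
  classical
  have hB := fun j => cardBound K ρ hmono hreg0 hfin hsup j
  refine ⟨fun j => (hB j).1, ?_⟩
  set N := Nat.card (Quotient ρ) * Nat.card (Quotient (NerS (K 0))) + 1 with hN
  have hrange : (Set.range K).Finite :=
    (finite_bounded_nerode N).subset (by rintro _ ⟨j, rfl⟩; exact ⟨(hB j).1, (hB j).2⟩)
  haveI : Finite ↥(Set.range K) := hrange.to_subtype
  set f : ℕ → ↥(Set.range K) := fun j => ⟨K j, Set.mem_range_self j⟩ with hf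
  obtain ⟨y, hy⟩ := Finite.exists_infinite_fiber f
  have hyinf : (f ⁻¹' {y}).Infinite := (Set.infinite_coe_iff (s := f ⁻¹' {y})).mp hy
  obtain ⟨n, hn⟩ := hyinf.nonempty
  have hanti : Antitone K := antitone_nat_of_succ_le hmono
  have hKn : K n = y.1 := congrArg Subtype.val hn
  have hconst : ∀ j, n ≤ j → K j = K n := by
    intro j hj
    obtain ⟨m, hm, hjm⟩ := hyinf.exists_gt j
    have hKm : K m = y.1 := congrArg Subtype.val hm
    have h1 : K m = K n := hKm.trans hKn.symm
    exact Set.Subset.antisymm (hanti hj) (h1 ▸ hanti hjm.le)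
  refine ⟨n, hconst, ⟨pre_mono (hanti (Nat.zero_le n)), ?_⟩, (hB n).2⟩
  intro s t hst
  obtain ⟨⟨hb, hρ⟩, h0⟩ := hst
  rcases Classical.em (s ∈ pre (K n)) with hs | hs
  · exact key2 K ρ hmono hsup n s t hs (hb.mp hs) hρ h0
  · exact nerS_dump hs (fun ht => hs (hb.mpr ht))
end

section
/- Suppose the languages M, C and K over Σ are regular. Then Ω(K) is regular, i.e. the operator Ω preserves regularity. -/
open Set

namespace RelObs

variable {α : Type*}

-- ====== auxiliary development ======
section Aux

lemma regular_of_ker {β : Type*} [Finite β] (f : List α → β) (L : Set (List α))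
    (h : ∀ s t, f s = f t → ∀ w, s ++ w ∈ L ↔ t ++ w ∈ L) : Regular L := by
  have h1 : Finite (Quotient (Setoid.ker f)) :=
    Finite.of_equiv _ (Setoid.quotientKerEquivRange f).symm
  exact Finite.of_surjective
    (Quotient.map' (id : List α → List α) (fun a b hab => h a b hab) :
      Quotient (Setoid.ker f) → Quotient (NerS L))
    (fun q => Quotient.inductionOn' q (fun s => ⟨Quotient.mk'' s, rfl⟩))

lemma nerS_rel {L : Set (List α)} {s t : List α}
    (h : (Quotient.mk (NerS L) s) = Quotient.mk (NerS L) t) :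
    ∀ w, s ++ w ∈ L ↔ t ++ w ∈ L := Quotient.exact h

lemma Regular.inter {A B : Set (List α)} (hA : Regular A) (hB : Regular B) :
    Regular (A ∩ B) := by
  haveI : Finite (Quotient (NerS A)) := hA
  haveI : Finite (Quotient (NerS B)) := hB
  apply regular_of_ker (fun s => (Quotient.mk (NerS A) s, Quotient.mk (NerS B) s))
  intro s t hst w
  have h1 := nerS_rel (congrArg Prod.fst hst) w
  have h2 := nerS_rel (congrArg Prod.snd hst) w
  simp only [mem_inter_iff, h1, h2]

lemma Regular.diff {A B : Set (List α)} (hA : Regular A) (hB : Regular B) :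
    Regular (A \ B) := by
  haveI : Finite (Quotient (NerS A)) := hA
  haveI : Finite (Quotient (NerS B)) := hB
  apply regular_of_ker (fun s => (Quotient.mk (NerS A) s, Quotient.mk (NerS B) s))
  intro s t hst w
  have h1 := nerS_rel (congrArg Prod.fst hst) w
  have h2 := nerS_rel (congrArg Prod.snd hst) w
  simp only [mem_diff, h1, h2]

lemma Regular.pre {L : Set (List α)} (hL : Regular L) : Regular (RelObs.pre L) := by
  haveI : Finite (Quotient (NerS L)) := hL
  apply regular_of_ker (fun s => Quotient.mk (NerS L) s)
  intro s t hst w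
  constructor
  · rintro ⟨u, huL, v, rfl⟩
    refine ⟨t ++ w ++ v, ?_, ⟨v, rfl⟩⟩
    rw [List.append_assoc] at huL ⊢
    exact (nerS_rel hst (w ++ v)).mp huL
  · rintro ⟨u, huL, v, rfl⟩
    refine ⟨s ++ w ++ v, ?_, ⟨v, rfl⟩⟩
    rw [List.append_assoc] at huL ⊢
    exact (nerS_rel hst (w ++ v)).mpr huL

lemma regular_iUnion {ι : Type*} [Finite ι] (L : ι → Set (List α))
    (hL : ∀ i, Regular (L i)) : Regular (⋃ i, L i) := by
  haveI : ∀ i, Finite (Quotient (NerS (L i))) := fun i => hL i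
  apply regular_of_ker (fun s => (fun i => Quotient.mk (NerS (L i)) s : ∀ i, Quotient (NerS (L i))))
  intro s t hst w
  simp only [mem_iUnion]
  exact exists_congr fun i => nerS_rel (congrFun hst i) w

lemma filter_split (p : α → Bool) :
    ∀ (u : List α) (a b : List α), u.filter p = a ++ b →
      ∃ u1 u2, u = u1 ++ u2 ∧ u1.filter p = a ∧ u2.filter p = b := by
  intro u
  induction u with
  | nil =>
    intro a b h
    rcases List.append_eq_nil_iff.mp h.symm with ⟨rfl, rfl⟩
    exact ⟨[], [], rfl, rfl, rfl⟩
  | cons x u ih =>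
    intro a b h
    by_cases hx : p x
    · rw [List.filter_cons_of_pos hx] at h
      cases a with
      | nil =>
        refine ⟨[], x :: u, rfl, rfl, ?_⟩
        rw [List.filter_cons_of_pos hx]
        simpa using h
      | cons y a' =>
        simp only [List.cons_append, List.cons.injEq] at h
        obtain ⟨rfl, h2⟩ := h
        obtain ⟨u1, u2, rfl, hu1, hu2⟩ := ih a' b h2
        exact ⟨x :: u1, u2, rfl, by rw [List.filter_cons_of_pos hx, hu1], hu2⟩
    · rw [List.filter_cons_of_neg (by simpa using hx)] at h
      obtain ⟨u1, u2, rfl, hu1, hu2⟩ := ih a b h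
      exact ⟨x :: u1, u2, rfl, by rw [List.filter_cons_of_neg (by simpa using hx), hu1], hu2⟩

lemma proj_append (obs : α → Bool) (s t : List α) :
    proj obs (s ++ t) = proj obs s ++ proj obs t := List.filter_append s t

lemma Regular.brack {N : Set (List α)} (obs : α → Bool) (hN : Regular N) :
    Regular (RelObs.brack obs N) := by
  haveI : Finite (Quotient (NerS N)) := hN
  apply regular_of_ker
    (fun s => Quotient.mk (NerS N) '' {s' | proj obs s' = proj obs s})
  intro s t hst w
  have key : ∀ s t : List α,
      (Quotient.mk (NerS N) '' {s' | proj obs s' = proj obs s}) =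
      (Quotient.mk (NerS N) '' {s' | proj obs s' = proj obs t}) →
      s ++ w ∈ RelObs.brack obs N → t ++ w ∈ RelObs.brack obs N := by
    intro s t hst
    rintro ⟨u, huN, hproj⟩
    rw [proj_append] at hproj
    obtain ⟨u1, u2, rfl, hu1, hu2⟩ := filter_split obs u _ _ hproj.symm
    have hmem : Quotient.mk (NerS N) u1 ∈
        Quotient.mk (NerS N) '' {s' | proj obs s' = proj obs s} := ⟨u1, hu1, rfl⟩
    rw [hst] at hmem
    obtain ⟨t', ht', hq⟩ := hmem
    refine ⟨t' ++ u2, (nerS_rel hq u2).mpr huN, ?_⟩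
    have ht'' : proj obs t' = proj obs t := ht'
    simp only [proj] at ht'' hu2 ⊢
    rw [List.filter_append, List.filter_append, ht'', hu2]
  exact ⟨key s t hst, key t s hst.symm⟩

/-- Extension (right-ideal generated by) a language. -/
def extL (L : Set (List α)) : Set (List α) := {s | ∃ p ∈ L, p <+: s}

lemma mem_extL_append {L : Set (List α)} {s w : List α} :
    s ++ w ∈ extL L ↔ s ∈ extL L ∨ ∃ w', w' <+: w ∧ s ++ w' ∈ L := by
  constructor
  · rintro ⟨p, hpL, hps⟩
    by_cases hlen : p.length ≤ s.length
    · exact Or.inl ⟨p, hpL, List.prefix_of_prefix_length_le hps ⟨w, rfl⟩ hlen⟩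
    · have hsp : s <+: p :=
        List.prefix_of_prefix_length_le ⟨w, rfl⟩ hps (le_of_not_ge hlen)
      obtain ⟨w', rfl⟩ := hsp
      obtain ⟨r, hr⟩ := hps
      rw [List.append_assoc] at hr
      exact Or.inr ⟨w', ⟨r, List.append_cancel_left hr⟩, hpL⟩
  · rintro (⟨p, hpL, hps⟩ | ⟨w', hw', hL⟩)
    · exact ⟨p, hpL, hps.trans ⟨w, rfl⟩⟩
    · obtain ⟨r, rfl⟩ := hw'
      exact ⟨s ++ w', hL, ⟨r, by rw [List.append_assoc]⟩⟩

lemma Regular.extL {L : Set (List α)} (hL : Regular L) : Regular (RelObs.extL L) := by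
  haveI : Finite (Quotient (NerS L)) := hL
  apply regular_of_ker
    (fun s => ((s ∈ RelObs.extL L : Prop), Quotient.mk (NerS L) s))
  intro s t hst w
  have h1 : (s ∈ RelObs.extL L) ↔ (t ∈ RelObs.extL L) :=
    iff_of_eq (congrArg Prod.fst hst)
  have h2 := nerS_rel (congrArg Prod.snd hst)
  rw [mem_extL_append, mem_extL_append, h1]
  exact or_congr Iff.rfl (exists_congr fun w' => and_congr Iff.rfl (h2 w'))

lemma mem_catSig_concat {L : Set (List α)} {s w' : List α} {τ σ : α} :
    s ++ (w' ++ [τ]) ∈ catSig L σ ↔ τ = σ ∧ s ++ w' ∈ L := by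
  constructor
  · rintro ⟨q, hq, heq⟩
    rw [← List.append_assoc] at heq
    obtain ⟨h1, h2⟩ := List.append_inj' heq rfl
    exact ⟨(List.cons.injEq _ _ _ _ ▸ h2 : _ ∧ _).1, h1 ▸ hq⟩
  · rintro ⟨rfl, hL⟩
    exact ⟨s ++ w', hL, by rw [List.append_assoc]⟩

lemma Regular.catSig {L : Set (List α)} (hL : Regular L) (σ : α) :
    Regular (RelObs.catSig L σ) := by
  haveI : Finite (Quotient (NerS L)) := hL
  apply regular_of_ker
    (fun s => ((s ∈ RelObs.catSig L σ : Prop), Quotient.mk (NerS L) s))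
  intro s t hst w
  rcases w.eq_nil_or_concat with rfl | ⟨w', τ, rfl⟩
  · simpa using iff_of_eq (congrArg Prod.fst hst)
  · rw [List.concat_eq_append, mem_catSig_concat, mem_catSig_concat]
    exact and_congr Iff.rfl (nerS_rel (congrArg Prod.snd hst) w')

-- ====== closed forms ======

lemma supN_eq (obs : α → Bool) (H A : Set (List α)) :
    supN obs H A = (A ∩ H) \ brack obs (H \ A) := by
  apply Subset.antisymm
  · rintro s ⟨A', ⟨hA'A, hA'⟩, hs⟩
    have hsbH : s ∈ RelObs.brack obs A' ∩ H := by rw [hA']; exact hs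
    refine ⟨⟨hA'A hs, hsbH.2⟩, ?_⟩
    rintro ⟨u, ⟨huH, huA⟩, hproj⟩
    have hu : u ∈ A' := by
      rw [← hA']; exact ⟨⟨s, hs, hproj.symm⟩, huH⟩
    exact huA (hA'A hu)
  · intro s hsN
    refine ⟨(A ∩ H) \ RelObs.brack obs (H \ A), ⟨fun x hx => hx.1.1, ?_⟩, hsN⟩
    apply Subset.antisymm
    · rintro x ⟨⟨u, ⟨⟨huA, huH⟩, hub⟩, hproj⟩, hxH⟩
      by_cases hxA : x ∈ A
      · refine ⟨⟨hxA, hxH⟩, ?_⟩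
        rintro ⟨v, hv, hpv⟩
        exact hub ⟨v, hv, hproj.symm.trans hpv⟩
      · exact absurd (⟨x, ⟨hxH, hxA⟩, hproj.symm⟩ : u ∈ RelObs.brack obs (H \ A)) hub
    · intro x hx
      exact ⟨⟨x, hx, rfl⟩, hx.1.2⟩

/-- the set of "bad" strings witnessing failure of the `F`-condition. -/
def badSet (obs : α → Bool) (M C K : Set (List α)) : Set (List α) :=
  ⋃ σ : α, brack obs ((catSig (pre C) σ ∩ pre M) \ pre K) ∩ catSig (pre C) σ

lemma pre_singleton (s : List α) : pre ({s} : Set (List α)) = {p | p <+: s} := by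
  ext p; simp [pre]

lemma Fop_eq (obs : α → Bool) (M C K : Set (List α)) :
    Fop obs M C K = pre K \ extL (badSet obs M C K) := by
  ext s
  simp only [Fop, mem_setOf_eq, mem_diff]
  refine and_congr Iff.rfl ?_
  constructor
  · intro hsub hext
    obtain ⟨p, hpbad, hps⟩ := hext
    simp only [badSet, mem_iUnion] at hpbad
    obtain ⟨σ, ⟨u, ⟨⟨huCσ, huM⟩, huK⟩, hproj⟩, hpCσ⟩ := hpbad
    refine huK (hsub ⟨?_, huM⟩)
    simp only [Dop, mem_iUnion]
    exact ⟨σ, ⟨p, ⟨by rw [pre_singleton]; exact hps, hpCσ⟩, hproj.symm⟩, huCσ⟩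
  · intro hno u hu
    obtain ⟨hu1, huM⟩ := hu
    simp only [Dop, mem_iUnion] at hu1
    obtain ⟨σ, ⟨p, ⟨hp_pre, hpCσ⟩, hproj⟩, huCσ⟩ := hu1
    rw [pre_singleton] at hp_pre
    by_contra huK
    refine hno ⟨p, ?_, hp_pre⟩
    simp only [badSet, mem_iUnion]
    exact ⟨σ, ⟨u, ⟨⟨huCσ, huM⟩, huK⟩, hproj.symm⟩, hpCσ⟩

end Aux

end RelObs

open RelObs

/-- `Ω` preserves regularity. -/
theorem statement16 {α : Type*} [Fintype α] (obs : α → Bool) (M C K : Set (List α))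
    (hCM : C ⊆ M) (hM : Regular M) (hC : Regular C) (hK : Regular K) :
    Regular (Omega obs M C K) := by
  rw [Omega, supN_eq, Fop_eq]
  have hpreC := hC.pre
  have hpreM := hM.pre
  have hpreK := hK.pre
  have hbad : Regular (badSet obs M C K) :=
    regular_iUnion _ fun σ =>
      ((((hpreC.catSig σ).inter hpreM).diff hpreK).brack obs).inter (hpreC.catSig σ)
  have hF : Regular (pre K \ extL (badSet obs M C K)) := hpreK.diff hbad.extL
  have hKF : Regular (K ∩ (pre K \ extL (badSet obs M C K))) := hK.inter hF
  have hH : Regular (pre C ∩ M) := hpreC.inter hM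
  exact (hKF.inter hH).diff ((hH.diff hKF).brack obs)
end
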